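/- arXiv:2507.18200 — 2 statements merged into one kernel-verified Lean document; each statement's English description precedes it below -/
import Mathlib

section
/- For b > 0 and 0 < α < β, the integral ∫_0^b (e^{-αx²} − e^{-βx²})/x dx equals (1/2)(Γ(0, b²β) − Γ(0, b²α) + ln(β/α)). -/
/-!
For `x > 0` the chain rule gives `d/dx E₁(c x²) = -2 e^{-c x²} / x`, so
`(E₁(β x²) - E₁(α x²)) / 2` is a primitive of the integrand on `(0, ∞)`.
Its limit at `0⁺` is `-log(β/α) / 2`: the difference `E₁ p - E₁ q = ∫_p^q e^{-t}/t dt`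
differs from `∫_p^q dt/t = log(q/p)` by `∫_p^q (1 - e^{-t})/t dt`, which lies in `[0, q - p]`.
The integrand is nonnegative, so it is integrable on `(0, b]` and the fundamental theorem of
calculus applies.
-/

open MeasureTheory Real Set Filter Topology

theorem integral_Ioc_eq_sub_of_hasDerivAt_of_tendsto_of_nonneg {g g' : ℝ → ℝ} {a b L : ℝ}
    (hab : a < b) (hderiv : ∀ x ∈ Ioc a b, HasDerivAt g (g' x) x)
    (hg' : ∀ x ∈ Ioo a b, 0 ≤ g' x) (hL : Tendsto g (𝓝[>] a) (𝓝 L)) :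
    ∫ x in Ioc a b, g' x = g b - L := by
  classical
  have hderiv' : ∀ x ∈ Ioo a b, HasDerivAt g (g' x) x :=
    fun x hx => hderiv x (Ioo_subset_Ioc_self hx)
  have hcont : ContinuousOn (Function.update g a L) (Icc a b) := by
    rw [continuousOn_update_iff, Icc_sdiff_left]
    refine ⟨fun x hx => (hderiv x hx).continuousAt.continuousWithinAt, fun _ => ?_⟩
    exact hL.mono_left (nhdsWithin_mono _ Ioc_subset_Ioi_self)
  have hint : IntegrableOn g' (Ioc a b) := by
    refine intervalIntegral.integrableOn_deriv_of_nonneg hcont (fun x hx => ?_) hg'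
    refine (hderiv' x hx).congr_of_eventuallyEq ?_
    filter_upwards [Ioi_mem_nhds hx.1] with y hy using Function.update_of_ne hy.ne' _ _
  rw [← intervalIntegral.integral_of_le hab.le]
  exact intervalIntegral.integral_eq_sub_of_hasDerivAt_of_tendsto hab hderiv'
    ((intervalIntegrable_iff_integrableOn_Ioc_of_le hab.le).2 hint) hL
    ((hderiv b (right_mem_Ioc.2 hab)).continuousAt.tendsto.mono_left nhdsWithin_le_nhds)

/-- The exponential integral `E₁ z = Γ(0, z)`; for `z ≤ 0` the integrand is not integrable and
the value is the junk value `0`. -/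
noncomputable def expIntegralE1 (z : ℝ) : ℝ := ∫ t in Ioi z, exp (-t) / t

theorem integrableOn_exp_neg_div_Ioi {z : ℝ} (hz : 0 < z) :
    IntegrableOn (fun t => exp (-t) / t) (Ioi z) := by
  refine ((exp_neg_integrableOn_Ioi z one_pos).div_const z).mono'
    ((continuousOn_id.neg.rexp.div continuousOn_id fun t ht =>
      (hz.trans ht).ne').aestronglyMeasurable measurableSet_Ioi) ?_
  filter_upwards [ae_restrict_mem measurableSet_Ioi] with t ht
  rw [norm_div, norm_of_nonneg (exp_pos _).le, norm_of_nonneg (hz.trans ht).le, neg_one_mul]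
  exact div_le_div_of_nonneg_left (exp_pos _).le hz ht.le

theorem expIntegralE1_sub_expIntegralE1 {p q : ℝ} (hp : 0 < p) (hpq : p ≤ q) :
    expIntegralE1 p - expIntegralE1 q = ∫ t in p..q, exp (-t) / t :=
  intervalIntegral.integral_Ioi_sub_Ioi (integrableOn_exp_neg_div_Ioi hp) hpq

theorem hasDerivAt_expIntegralE1 {z : ℝ} (hz : 0 < z) :
    HasDerivAt expIntegralE1 (-(exp (-z) / z)) z := by
  have hcont : ContinuousOn (fun t => exp (-t) / t) (Ioi 0) :=
    continuousOn_id.neg.rexp.div continuousOn_id fun t ht => ht.ne'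
  have hFTC : HasDerivAt (fun y => ∫ t in (z / 2)..y, exp (-t) / t) (exp (-z) / z) z :=
    intervalIntegral.integral_hasDerivAt_right
      ((hcont.mono fun t ht => by
        rw [uIcc_of_le (by linarith)] at ht; exact (half_pos hz).trans_le ht.1).intervalIntegrable)
      (hcont.stronglyMeasurableAtFilter isOpen_Ioi z hz) (hcont.continuousAt (Ioi_mem_nhds hz))
  refine hFTC.const_sub (expIntegralE1 (z / 2)) |>.congr_of_eventuallyEq ?_
  filter_upwards [Ioi_mem_nhds (half_lt_self hz)] with y hy
  rw [← expIntegralE1_sub_expIntegralE1 (half_pos hz) hy.le, sub_sub_cancel]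

theorem abs_expIntegralE1_sub_sub_log_le {p q : ℝ} (hp : 0 < p) (hpq : p ≤ q) :
    |expIntegralE1 p - expIntegralE1 q - log (q / p)| ≤ q - p := by
  have hpos : uIcc p q ⊆ Ioi 0 := by
    rw [uIcc_of_le hpq]; exact fun t ht => hp.trans_le ht.1
  have hexp : IntervalIntegrable (fun t => exp (-t) / t) volume p q :=
    (continuousOn_id.neg.rexp.div continuousOn_id fun t ht => (hpos ht).ne').intervalIntegrable
  have hinv : IntervalIntegrable (fun t : ℝ => t⁻¹) volume p q :=
    (continuousOn_inv₀.mono fun t ht => (hpos ht).ne').intervalIntegrable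
  rw [expIntegralE1_sub_expIntegralE1 hp hpq, ← integral_inv_of_pos hp (hp.trans_le hpq),
    ← intervalIntegral.integral_sub hexp hinv, ← Real.norm_eq_abs]
  have hbound : ∀ t ∈ uIoc p q, ‖exp (-t) / t - t⁻¹‖ ≤ 1 := by
    intro t ht
    have ht0 : 0 < t := hpos (uIoc_subset_uIcc ht)
    rw [← one_div, div_sub_div_same, norm_div, norm_of_nonneg ht0.le, div_le_one ht0,
      Real.norm_eq_abs, abs_of_nonpos (by linarith [exp_le_one_iff.2 (neg_nonpos.2 ht0.le)])]
    linarith [one_sub_le_exp_neg t]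
  simpa [abs_of_nonneg (sub_nonneg.2 hpq)] using
    intervalIntegral.norm_integral_le_of_norm_le_const hbound

theorem tendsto_expIntegralE1_mul_sub_expIntegralE1_mul {α β : ℝ} (hα : 0 < α)
    (hαβ : α ≤ β) :
    Tendsto (fun u => expIntegralE1 (u * α) - expIntegralE1 (u * β)) (𝓝[>] 0)
      (𝓝 (log (β / α))) := by
  rw [tendsto_iff_norm_sub_tendsto_zero]
  refine squeeze_zero_norm' ?_ (?_ : Tendsto (fun u => u * β - u * α) (𝓝[>] 0) (𝓝 0))
  · filter_upwards [self_mem_nhdsWithin] with u (hu : 0 < u)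
    rw [norm_norm, Real.norm_eq_abs, ← mul_div_mul_left β α hu.ne']
    exact abs_expIntegralE1_sub_sub_log_le (by positivity) (by gcongr)
  · exact tendsto_nhdsWithin_of_tendsto_nhds <|
      (by fun_prop : Continuous fun u : ℝ => u * β - u * α).tendsto' 0 0 (by simp)

theorem hasDerivAt_expIntegralE1_sq_mul {c x : ℝ} (hc : 0 < c) (hx : x ≠ 0) :
    HasDerivAt (fun x => expIntegralE1 (x ^ 2 * c)) (-2 * (exp (-c * x ^ 2) / x)) x := by
  have hsq : HasDerivAt (fun x => x ^ 2 * c) (2 * x * c) x := by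
    simpa using (hasDerivAt_pow 2 x).mul_const c
  refine ((hasDerivAt_expIntegralE1 (by positivity)).comp x hsq).congr_deriv ?_
  field_simp

theorem stmt_6 (b α β : ℝ) (hb : 0 < b) (hα : 0 < α) (hαβ : α < β) :
    ∫ x in Set.Ioc (0 : ℝ) b, (Real.exp (-α * x ^ 2) - Real.exp (-β * x ^ 2)) / x =
      (1 / 2) * ((∫ t in Set.Ioi (b ^ 2 * β), Real.exp (-t) / t) -
        (∫ t in Set.Ioi (b ^ 2 * α), Real.exp (-t) / t) + Real.log (β / α)) := by
  have hderiv : ∀ x ∈ Ioc 0 b, HasDerivAt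
      (fun x => (expIntegralE1 (x ^ 2 * β) - expIntegralE1 (x ^ 2 * α)) / 2)
      ((exp (-α * x ^ 2) - exp (-β * x ^ 2)) / x) x := fun x hx => by
    refine (((hasDerivAt_expIntegralE1_sq_mul (hα.trans hαβ) hx.1.ne').sub
      (hasDerivAt_expIntegralE1_sq_mul hα hx.1.ne')).div_const 2).congr_deriv ?_
    ring
  have hnonneg : ∀ x ∈ Ioo 0 b, 0 ≤ (exp (-α * x ^ 2) - exp (-β * x ^ 2)) / x := by
    intro x hx
    have : exp (-β * x ^ 2) ≤ exp (-α * x ^ 2) := exp_le_exp.2 (by nlinarith [hx.1])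
    exact div_nonneg (sub_nonneg.2 this) hx.1.le
  have hlim : Tendsto (fun x => (expIntegralE1 (x ^ 2 * β) - expIntegralE1 (x ^ 2 * α)) / 2)
      (𝓝[>] 0) (𝓝 (-log (β / α) / 2)) := by
    have hsq : Tendsto (fun x : ℝ => x ^ 2) (𝓝[>] 0) (𝓝[>] 0) :=
      tendsto_nhdsWithin_iff.2
        ⟨((continuous_pow 2).tendsto' 0 0 (zero_pow two_ne_zero)).mono_left nhdsWithin_le_nhds,
          eventually_nhdsWithin_of_forall fun x (hx : 0 < x) => pow_pos hx 2⟩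
    convert
      ((tendsto_expIntegralE1_mul_sub_expIntegralE1_mul hα hαβ.le).comp hsq).neg.div_const 2
      using 2 with x
    simp only [Function.comp_apply]; ring
  rw [integral_Ioc_eq_sub_of_hasDerivAt_of_tendsto_of_nonneg hb hderiv hnonneg hlim]
  simp only [expIntegralE1]
  ring
end

section
/- Change of variables for line-to-point integrals through the foot of the perpendicular: for σ > 0 and a ≤ z ≤ b, ∫_a^b f(√(σ²+(z−z')²)) dz' = ∫_σ^{r₂} 2 f(r) r/√(r²−σ²) dr + ∫_{r₂}^{r₃} f(r) r/√(r²−σ²) dr, where r₂ = min(√(σ²+(z−a)²), √(σ²+(z−b)²)) and r₃ = max(√(σ²+(z−a)²), √(σ²+(z−b)²)). -/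
/-!
Along the line, the distance `r = √(σ² + u²)` to the point is an injective function of the
offset `u ≥ 0` from the foot of the perpendicular, with `dr = u / r du`, i.e.
`du = r / √(r² - σ²) dr`. Splitting `[a, b]` at the foot `z`, each half turns into an integral
in `r` starting at `σ`; the radii up to the nearer endpoint are covered twice, those between
the nearer and the farther endpoint once.
-/

open Real MeasureTheory Set intervalIntegral

section DistanceToPoint

variable {σ : ℝ}

lemma hasDerivAt_sqrt_sq_add_sq {u : ℝ} (hu : u ≠ 0) :
    HasDerivAt (fun u : ℝ => √(σ ^ 2 + u ^ 2)) (u / √(σ ^ 2 + u ^ 2)) u := by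
  have hpos : 0 < σ ^ 2 + u ^ 2 := by positivity
  convert ((hasDerivAt_pow 2 u).const_add (σ ^ 2)).sqrt hpos.ne' using 1
  field_simp
  ring

lemma strictMonoOn_sqrt_sq_add_sq : StrictMonoOn (fun u : ℝ => √(σ ^ 2 + u ^ 2)) (Ici 0) :=
  fun _ hx _ _ hxy => Real.sqrt_lt_sqrt (by positivity) (by gcongr)

lemma image_sqrt_sq_add_sq_Ioc (hσ : 0 ≤ σ) {L : ℝ} (hL : 0 ≤ L) :
    (fun u : ℝ => √(σ ^ 2 + u ^ 2)) '' Ioc 0 L = Ioc σ √(σ ^ 2 + L ^ 2) := by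
  ext r
  constructor
  · rintro ⟨u, ⟨hu0, huL⟩, rfl⟩
    constructor
    · calc σ = √(σ ^ 2) := (Real.sqrt_sq hσ).symm
        _ < √(σ ^ 2 + u ^ 2) := Real.sqrt_lt_sqrt (by positivity) (by nlinarith)
    · exact Real.sqrt_le_sqrt (by nlinarith)
  · rintro ⟨hσr, hrL⟩
    have hr2 : r ^ 2 ≤ σ ^ 2 + L ^ 2 := (Real.le_sqrt (by linarith) (by positivity)).mp hrL
    refine ⟨√(r ^ 2 - σ ^ 2), ⟨Real.sqrt_pos.mpr (by nlinarith), ?_⟩, ?_⟩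
    · exact (Real.sqrt_le_left hL).mpr (by linarith)
    · dsimp only
      rw [Real.sq_sqrt (by nlinarith), add_sub_cancel, Real.sqrt_sq (by linarith)]

lemma abs_div_sqrt_sq_add_sq_mul {u : ℝ} (hu : u ≠ 0) (f : ℝ → ℝ) :
    |u / √(σ ^ 2 + u ^ 2)| *
        (f √(σ ^ 2 + u ^ 2) * √(σ ^ 2 + u ^ 2) / √(√(σ ^ 2 + u ^ 2) ^ 2 - σ ^ 2)) =
      f √(σ ^ 2 + u ^ 2) := by
  have hr : 0 < √(σ ^ 2 + u ^ 2) := Real.sqrt_pos.mpr (by positivity)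
  rw [Real.sq_sqrt (by positivity), add_sub_cancel_left, Real.sqrt_sq_eq_abs, abs_div,
    abs_of_pos hr]
  field_simp

lemma integral_comp_sqrt_sq_add_sq (hσ : 0 ≤ σ) {L : ℝ} (hL : 0 ≤ L) (f : ℝ → ℝ) :
    ∫ u in 0..L, f √(σ ^ 2 + u ^ 2) =
      ∫ r in σ..√(σ ^ 2 + L ^ 2), f r * r / √(r ^ 2 - σ ^ 2) := by
  have hσL : σ ≤ √(σ ^ 2 + L ^ 2) := Real.le_sqrt_of_sq_le (by nlinarith)
  rw [integral_of_le hL, integral_of_le hσL, ← image_sqrt_sq_add_sq_Ioc hσ hL,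
    integral_image_eq_integral_abs_deriv_smul measurableSet_Ioc
      (fun u hu => (hasDerivAt_sqrt_sq_add_sq hu.1.ne').hasDerivWithinAt)
      (strictMonoOn_sqrt_sq_add_sq.injOn.mono fun _ hu => hu.1.le)]
  exact setIntegral_congr_fun measurableSet_Ioc
    fun u hu => (abs_div_sqrt_sq_add_sq_mul hu.1.ne' f).symm

lemma intervalIntegrable_mul_div_sqrt_sq_sub_sq (hσ : 0 ≤ σ) {L : ℝ} (hL : 0 ≤ L)
    {f : ℝ → ℝ} (hf : Continuous f) :
    IntervalIntegrable (fun r => f r * r / √(r ^ 2 - σ ^ 2)) volume σ √(σ ^ 2 + L ^ 2) := by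
  have hσL : σ ≤ √(σ ^ 2 + L ^ 2) := Real.le_sqrt_of_sq_le (by nlinarith)
  rw [intervalIntegrable_iff_integrableOn_Ioc_of_le hσL, ← image_sqrt_sq_add_sq_Ioc hσ hL,
    integrableOn_image_iff_integrableOn_abs_deriv_smul measurableSet_Ioc
      (fun u hu => (hasDerivAt_sqrt_sq_add_sq hu.1.ne').hasDerivWithinAt)
      (strictMonoOn_sqrt_sq_add_sq.injOn.mono fun _ hu => hu.1.le)]
  have hF : Continuous fun u => f √(σ ^ 2 + u ^ 2) := hf.comp (by fun_prop)
  exact hF.integrableOn_Ioc.congr_fun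
    (fun u hu => (abs_div_sqrt_sq_add_sq_mul hu.1.ne' f).symm) measurableSet_Ioc

end DistanceToPoint

lemma integral_add_integral_eq_two_smul_integral_min_add {E : Type*} [NormedAddCommGroup E]
    [NormedSpace ℝ E] {g : ℝ → E} {c a b : ℝ} (ha : IntervalIntegrable g volume c a)
    (hb : IntervalIntegrable g volume c b) :
    (∫ x in c..a, g x) + ∫ x in c..b, g x =
      (2 : ℝ) • (∫ x in c..min a b, g x) + ∫ x in min a b..max a b, g x := by
  wlog hab : a ≤ b generalizing a b
  · rw [add_comm, min_comm, max_comm]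
    exact this hb ha (le_of_not_ge hab)
  rw [min_eq_left hab, max_eq_right hab, ← integral_add_adjacent_intervals ha (ha.symm.trans hb),
    two_smul]
  abel

theorem stmt_10 (σ z a b : ℝ) (hσ : 0 < σ) (haz : a ≤ z) (hzb : z ≤ b)
    (f : ℝ → ℝ) (hf : Continuous f) :
    ∫ z' in a..b, f (Real.sqrt (σ ^ 2 + (z - z') ^ 2)) =
      (∫ r in σ..(min (Real.sqrt (σ ^ 2 + (z - a) ^ 2)) (Real.sqrt (σ ^ 2 + (z - b) ^ 2))),
        2 * f r * r / Real.sqrt (r ^ 2 - σ ^ 2)) +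
      ∫ r in (min (Real.sqrt (σ ^ 2 + (z - a) ^ 2)) (Real.sqrt (σ ^ 2 + (z - b) ^ 2)))..(max
          (Real.sqrt (σ ^ 2 + (z - a) ^ 2)) (Real.sqrt (σ ^ 2 + (z - b) ^ 2))),
        f r * r / Real.sqrt (r ^ 2 - σ ^ 2) := by
  have hF : Continuous fun z' => f √(σ ^ 2 + (z - z') ^ 2) := hf.comp (by fun_prop)
  have hleft : ∫ z' in a..z, f √(σ ^ 2 + (z - z') ^ 2) =
      ∫ r in σ..√(σ ^ 2 + (z - a) ^ 2), f r * r / √(r ^ 2 - σ ^ 2) := by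
    rw [integral_comp_sub_left (fun u => f √(σ ^ 2 + u ^ 2)), sub_self,
      integral_comp_sqrt_sq_add_sq hσ.le (sub_nonneg.mpr haz)]
  have hright : ∫ z' in z..b, f √(σ ^ 2 + (z - z') ^ 2) =
      ∫ r in σ..√(σ ^ 2 + (z - b) ^ 2), f r * r / √(r ^ 2 - σ ^ 2) := by
    simp_rw [sub_sq_comm z]
    rw [integral_comp_sub_right (fun u => f √(σ ^ 2 + u ^ 2)), sub_self,
      integral_comp_sqrt_sq_add_sq hσ.le (sub_nonneg.mpr hzb)]
  have hdouble : ∀ c d : ℝ, ∫ r in c..d, 2 * f r * r / √(r ^ 2 - σ ^ 2) =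
      (2 : ℝ) • ∫ r in c..d, f r * r / √(r ^ 2 - σ ^ 2) := fun c d => by
    rw [← intervalIntegral.integral_smul]
    simp only [smul_eq_mul, mul_assoc, mul_div_assoc]
  rw [← integral_add_adjacent_intervals (hF.intervalIntegrable a z) (hF.intervalIntegrable z b),
    hleft, hright, hdouble]
  refine integral_add_integral_eq_two_smul_integral_min_add ?_ ?_
  · exact intervalIntegrable_mul_div_sqrt_sq_sub_sq hσ.le (sub_nonneg.mpr haz) hf
  · simpa only [sub_sq_comm b] using
      intervalIntegrable_mul_div_sqrt_sq_sub_sq hσ.le (sub_nonneg.mpr hzb) hf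
end
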